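/- arXiv:1309.2274 — 2 statements merged into one kernel-verified Lean document; each statement's English description precedes it below -/
import Mathlib

section
/- (Theorem of limited growth, discrete form.) Let w_* ∈ (0,1], let j* be a positive integer, and for each j ∈ {1,…,j*} let w_{#j} : ℕ → ℝ be nonnegative. Set w(t) := Σ_{j=1}^{j*} w_{#j}(t), let v : ℕ → ℝ satisfy w(t) ≥ w_*·v(t) for all t, and let P : ℕ → ℝ satisfy P(t+1) = P(t) + v(t+1) − w(t+1). Fix t₀ ∈ ℕ and suppose the trajectory is responsible at t₀, i.e. for each j the series Σ_{t ≥ t₀} w_{#j}(t) converges with sum at most σ_j, where σ_1,…,σ_{j*} are fixed nonnegative reals. Then for every t ≥ t₀: P(t) ≤ P(t₀) + (1/w_* − 1) · Σ_{j=1}^{j*} σ_j; in particular P is bounded above on {t : t ≥ t₀}. -/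
/-- Theorem of limited growth (discrete form): along a trajectory that is
responsible at `t₀` — that is, for every ecosystem service `j` the series
`∑_{t ≥ t₀} w_{#j}(t)` converges with sum at most `σ j` — the mass-energy
scale satisfies `P(t) ≤ P(t₀) + (1/w_* − 1) · ∑ j, σ j` for all `t ≥ t₀`;
in particular `P` is bounded above on `{t : t ≥ t₀}`. -/
theorem limited_growth (wstar : ℝ) (h0 : 0 < wstar) (h1 : wstar ≤ 1)
    (jstar : ℕ) (hjstar : 0 < jstar)
    (wj : Fin jstar → ℕ → ℝ)
    (hwj_nonneg : ∀ j t, 0 ≤ wj j t)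
    (w : ℕ → ℝ) (hw_def : ∀ t, w t = ∑ j, wj j t)
    (v : ℕ → ℝ) (hv : ∀ t, w t ≥ wstar * v t)
    (P : ℕ → ℝ) (hP : ∀ t, P (t + 1) = P t + v (t + 1) - w (t + 1))
    (t₀ : ℕ) (σ : Fin jstar → ℝ) (hσ : ∀ j, 0 ≤ σ j)
    (hresp : ∀ j, Summable (fun n : ℕ => wj j (t₀ + n)) ∧
      ∑' n : ℕ, wj j (t₀ + n) ≤ σ j) :
    (∀ t, t₀ ≤ t → P t ≤ P t₀ + (1 / wstar - 1) * ∑ j, σ j) ∧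
    ∃ B : ℝ, ∀ t, t₀ ≤ t → P t ≤ B := by
  have hw_nonneg : ∀ t, 0 ≤ w t := by
    intro t; rw [hw_def]; exact Finset.sum_nonneg fun j _ => hwj_nonneg j t
  have hc : 0 ≤ 1 / wstar - 1 := by
    have : 1 ≤ 1 / wstar := (le_div_iff₀ h0).2 (by linarith)
    linarith
  -- step bound: v(s) - w(s) ≤ (1/wstar - 1) * w(s)
  have hstep : ∀ s, v s - w s ≤ (1 / wstar - 1) * w s := by
    intro s
    have hv' : v s ≤ w s / wstar := by
      rw [le_div_iff₀ h0]; have := hv s; nlinarith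
    have : w s / wstar = (1 / wstar) * w s := by ring
    nlinarith [hw_nonneg s]
  -- partial sums of w from t₀ are bounded by ∑ σ
  have hsum : ∀ k, ∑ n ∈ Finset.range k, w (t₀ + n) ≤ ∑ j, σ j := by
    intro k
    have : ∑ n ∈ Finset.range k, w (t₀ + n)
        = ∑ j, ∑ n ∈ Finset.range k, wj j (t₀ + n) := by
      simp only [hw_def]; rw [Finset.sum_comm]
    rw [this]
    refine Finset.sum_le_sum fun j _ => ?_
    calc ∑ n ∈ Finset.range k, wj j (t₀ + n)
        ≤ ∑' n : ℕ, wj j (t₀ + n) :=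
          Summable.sum_le_tsum _ (fun n _ => hwj_nonneg j _) (hresp j).1
      _ ≤ σ j := (hresp j).2
  have hsum' : ∀ k, ∑ n ∈ Finset.range k, w (t₀ + n + 1) ≤ ∑ j, σ j := by
    intro k
    have h := Finset.sum_range_succ' (fun n => w (t₀ + n)) k
    have h2 := hsum (k + 1)
    have he : ∀ n, t₀ + (n + 1) = t₀ + n + 1 := fun n => by ring
    simp only [he] at h
    have h3 : 0 ≤ w (t₀ + 0) := hw_nonneg _
    linarith [h.symm ▸ h2]
  -- main induction
  have main : ∀ k, P (t₀ + k) ≤ P t₀ + (1 / wstar - 1) * ∑ n ∈ Finset.range k, w (t₀ + n + 1) := by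
    intro k
    induction k with
    | zero => simp
    | succ k ih =>
      have he : t₀ + (k + 1) = (t₀ + k) + 1 := by ring
      rw [he, hP (t₀ + k), Finset.sum_range_succ]
      nlinarith [hstep (t₀ + k + 1)]
  have key : ∀ t, t₀ ≤ t → P t ≤ P t₀ + (1 / wstar - 1) * ∑ j, σ j := by
    intro t ht
    obtain ⟨k, rfl⟩ := Nat.exists_eq_add_of_le ht
    calc P (t₀ + k) ≤ P t₀ + (1 / wstar - 1) * ∑ n ∈ Finset.range k, w (t₀ + n + 1) := main k
      _ ≤ P t₀ + (1 / wstar - 1) * ∑ j, σ j := by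
          have := hsum' k; nlinarith
  exact ⟨key, ⟨_, key⟩⟩
end

section
/- (Irresponsibility of unbounded growth.) Let t₀ ∈ ℝ, w_* ∈ (0,1], and let i*, j* be positive integers. For each pair (i,j) ∈ {1,…,i*} × {1,…,j*} let w_{ij} : ℝ → ℝ be a continuous nonnegative function, set w(t) := Σ_{i,j} w_{ij}(t), and let v : ℝ → ℝ be continuous with w(t) ≥ w_*·v(t) for all t ≥ t₀. Let P : ℝ → ℝ be differentiable with P'(t) = v(t) − w(t) for all t ≥ t₀. If there exists a sequence (t_n) in [t₀, ∞) with P(t_n) → ∞, then there exists a pair (i,j) such that w_{ij} is not integrable on [t₀, ∞), i.e. ∫_{t₀}^{T} w_{ij} → ∞ as T → ∞. -/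
/-!
If every flow `w_{ij}` were integrable on `[t₀, ∞)`, so would be the total waste `w`. Since
`w_* v ≤ w` and `w ≥ 0`, the growth rate satisfies `P' = v - w ≤ w / w_*`, hence
`P T ≤ P t₀ + (∫_{t₀}^∞ w) / w_*` for all `T ≥ t₀`, contradicting `P (t_n) → ∞`.
For a nonnegative flow, failure of integrability means its running integral is unbounded and
monotone, so it tends to infinity.
-/

open MeasureTheory Set Filter

theorem tendsto_intervalIntegral_atTop_of_not_integrableOn_Ici {f : ℝ → ℝ} {a : ℝ}
    (hf : ∀ b, IntervalIntegrable f volume a b) (hf0 : 0 ≤ f)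
    (hfa : ¬ IntegrableOn f (Ici a)) :
    Tendsto (fun T => ∫ s in a..T, f s) atTop atTop := by
  have hmono : Monotone (fun T => ∫ s in a..T, f s) := by
    intro x y hxy
    have hsplit := intervalIntegral.integral_interval_sub_left (hf y) (hf x)
    have hxy0 : 0 ≤ ∫ s in x..y, f s := intervalIntegral.integral_nonneg hxy fun t _ => hf0 t
    dsimp only
    linarith
  refine tendsto_atTop_atTop_of_monotone' hmono fun ⟨C, hC⟩ => hfa ?_
  rw [integrableOn_Ici_iff_integrableOn_Ioi]
  refine integrableOn_Ioi_of_intervalIntegral_norm_bounded C a (fun b => (hf b).1) tendsto_id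
    (Eventually.of_forall fun T => ?_)
  simpa only [Real.norm_of_nonneg (hf0 _)] using hC (mem_range_self T)

theorem le_add_integral_Ici_of_deriv_le {P g : ℝ → ℝ} {a T : ℝ}
    (hP : ∀ t ∈ Ici a, DifferentiableAt ℝ P t) (hPg : ∀ t ∈ Ici a, deriv P t ≤ g t)
    (hg : IntegrableOn g (Ici a)) (hg0 : ∀ t ∈ Ici a, 0 ≤ g t) (hT : a ≤ T) :
    P T ≤ P a + ∫ t in Ici a, g t := by
  have hFTC : P T - P a ≤ ∫ t in a..T, g t :=
    intervalIntegral.sub_le_integral_of_hasDeriv_right_of_le hT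
      (fun t ht => (hP t ht.1).continuousAt.continuousWithinAt)
      (fun t ht => (hP t (le_of_lt ht.1)).hasDerivAt.hasDerivWithinAt)
      (hg.mono_set Icc_subset_Ici_self) (fun t ht => hPg t (le_of_lt ht.1))
  have htail : ∫ t in a..T, g t ≤ ∫ t in Ici a, g t := by
    rw [intervalIntegral.integral_of_le hT]
    exact setIntegral_mono_set hg ((ae_restrict_iff' measurableSet_Ici).2 (ae_of_all _ hg0))
      (Ioc_subset_Ioi_self.trans Ioi_subset_Ici_self).eventuallyLE
  linarith

theorem unbounded_growth_irresponsible_general (t₀ : ℝ) (wstar : ℝ)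
    (h0 : 0 < wstar)
    (istar jstar : ℕ)
    (wij : Fin istar → Fin jstar → ℝ → ℝ)
    (hwij_cont : ∀ i j, Continuous (wij i j))
    (hwij_nonneg : ∀ i j t, 0 ≤ wij i j t)
    (w : ℝ → ℝ) (hw_def : ∀ t, w t = ∑ i, ∑ j, wij i j t)
    (v : ℝ → ℝ)
    (hw_ge : ∀ t, t₀ ≤ t → w t ≥ wstar * v t)
    (P : ℝ → ℝ) (hP : Differentiable ℝ P)
    (hP' : ∀ t, t₀ ≤ t → deriv P t = v t - w t)
    (tn : ℕ → ℝ) (htn : ∀ n, t₀ ≤ tn n)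
    (hPtn : Filter.Tendsto (fun n => P (tn n)) Filter.atTop Filter.atTop) :
    ∃ i : Fin istar, ∃ j : Fin jstar,
      ¬ IntegrableOn (wij i j) (Set.Ici t₀) ∧
      Filter.Tendsto (fun T => ∫ s in t₀..T, wij i j s)
        Filter.atTop Filter.atTop := by
  suffices ∃ i j, ¬ IntegrableOn (wij i j) (Ici t₀) by
    obtain ⟨i, j, hij⟩ := this
    exact ⟨i, j, hij, tendsto_intervalIntegral_atTop_of_not_integrableOn_Ici
      (fun b => (hwij_cont i j).intervalIntegrable t₀ b) (hwij_nonneg i j) hij⟩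
  by_contra! hint
  have hw0 (t : ℝ) : 0 ≤ w t := hw_def t ▸ Finset.sum_nonneg fun i _ =>
    Finset.sum_nonneg fun j _ => hwij_nonneg i j t
  have hw : IntegrableOn w (Ici t₀) :=
    IntegrableOn.congr_fun
      (integrable_finsetSum _ fun i _ => integrable_finsetSum _ fun j _ => hint i j)
      (fun t _ => (hw_def t).symm) measurableSet_Ici
  have hrate (t : ℝ) (ht : t ∈ Ici t₀) : deriv P t ≤ w t / wstar := by
    rw [hP' t ht, le_div_iff₀ h0]
    nlinarith [hw_ge t ht, mul_nonneg (hw0 t) h0.le]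
  obtain ⟨n, hn⟩ := (hPtn.eventually_gt_atTop (P t₀ + ∫ t in Ici t₀, w t / wstar)).exists
  exact hn.not_ge <| le_add_integral_Ici_of_deriv_le (fun t _ => hP t) hrate
    (hw.div_const wstar) (fun t _ => div_nonneg (hw0 t) h0.le) (htn n)

/-- Irresponsibility of unbounded growth: if the mass-energy scale `P`, with
`P' = v − w` on `[t₀, ∞)` and total waste `w = ∑_{i,j} w_{ij}` satisfying
`w ≥ w_* · v` there, is unbounded along some sequence `(t_n)` in `[t₀, ∞)`,
then some individual waste flow `w_{ij}` is not integrable on `[t₀, ∞)`: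
its integral `∫_{t₀}^{T} w_{ij}` tends to infinity as `T → ∞`. -/
theorem unbounded_growth_irresponsible (t₀ : ℝ) (wstar : ℝ)
    (h0 : 0 < wstar) (h1 : wstar ≤ 1)
    (istar jstar : ℕ) (histar : 0 < istar) (hjstar : 0 < jstar)
    (wij : Fin istar → Fin jstar → ℝ → ℝ)
    (hwij_cont : ∀ i j, Continuous (wij i j))
    (hwij_nonneg : ∀ i j t, 0 ≤ wij i j t)
    (w : ℝ → ℝ) (hw_def : ∀ t, w t = ∑ i, ∑ j, wij i j t)
    (v : ℝ → ℝ) (hv_cont : Continuous v)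
    (hw_ge : ∀ t, t₀ ≤ t → w t ≥ wstar * v t)
    (P : ℝ → ℝ) (hP : Differentiable ℝ P)
    (hP' : ∀ t, t₀ ≤ t → deriv P t = v t - w t)
    (tn : ℕ → ℝ) (htn : ∀ n, t₀ ≤ tn n)
    (hPtn : Filter.Tendsto (fun n => P (tn n)) Filter.atTop Filter.atTop) :
    ∃ i : Fin istar, ∃ j : Fin jstar,
      ¬ IntegrableOn (wij i j) (Set.Ici t₀) ∧
      Filter.Tendsto (fun T => ∫ s in t₀..T, wij i j s)
        Filter.atTop Filter.atTop :=
  unbounded_growth_irresponsible_general t₀ wstar h0 istar jstar wij hwij_cont hwij_nonneg w hw_def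
    v hw_ge P hP hP' tn htn hPtn
end
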